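/- Let 0 < α < β and p₁, p₂ > 0 with p₁ + p₂ = 1. Then there exists a constant C ≥ 1 such that for all n ≥ 1, C⁻¹·n^{−1/α} ≤ ∫₀¹ (x'_n(ω) − 1/2) dω ≤ C·n^{−1/α}, where the integral is with respect to Lebesgue measure on [0,1]. -/

import Mathlib

/-!
Write `E n = ∫₀¹ x_n`. Since `φ` maps `[0,p₁)` and `[p₁,1]` affinely onto `[0,1]`, it preserves
Lebesgue measure, so `∫₀¹ (x'_n - 1/2) = E n / 2` and it suffices to show `E n ≍ n^{-1/α}`.

Lower bound: every parameter is at least `α`, and by Bernoulli's inequality one backward step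
through `T_γ`, `γ ≥ α`, raises `x^{-α}` by at most `α 2^α`; hence `x_n(ω) ≳ n^{-1/α}` uniformly
in `ω`.

Upper bound: when `ω < p₁` the step uses `T_α`, and `x ≤ T_α x - (T_α x)^{1+α}/2`; otherwise
`x ≤ T_β x`. Integrating and applying Jensen's inequality gives
`E (n+1) ≤ E n - (p₁/2) E n^{1+α}`, so `E n^{-α}` grows at least linearly (Bernoulli again).
-/

noncomputable section

open Real MeasureTheory Set Filter

/-- The LSV map `T_γ` on `[0,1]`: `x(1+2^γ x^γ)` on `[0,1/2]`, `2x-1` on `(1/2,1]`. -/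
noncomputable def lsv (γ : ℝ) (x : ℝ) : ℝ :=
  if x ≤ 1 / 2 then x * (1 + 2 ^ γ * x ^ γ) else 2 * x - 1

/-- The left branch of the LSV map. -/
noncomputable def lsvLeft (γ : ℝ) (x : ℝ) : ℝ := x * (1 + 2 ^ γ * x ^ γ)

/-- The random parameter selection: `α` for `ω ∈ [0,p₁)`, `β` for `ω ∈ [p₁,1]`. -/
noncomputable def sel (α β p₁ : ℝ) (ω : ℝ) : ℝ := if ω < p₁ then α else β

/-- The randomizing map `φ` on `[0,1]`. -/
noncomputable def phiMap (p₁ p₂ : ℝ) (ω : ℝ) : ℝ :=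
  if ω < p₁ then ω / p₁ else (ω - p₁) / p₂

/-- The skew product `S(x,ω) = (T_{α(ω)}(x), φ(ω))`. -/
noncomputable def skew (α β p₁ p₂ : ℝ) (z : ℝ × ℝ) : ℝ × ℝ :=
  (lsv (sel α β p₁ z.2) z.1, phiMap p₁ p₂ z.2)

/-- Random iterates: `randIter n ω = T_ω^n = T_{α(φ^{n-1}ω)} ∘ ⋯ ∘ T_{α(ω)}`. -/
noncomputable def randIter (α β p₁ p₂ : ℝ) : ℕ → ℝ → ℝ → ℝ
  | 0, _, x => x
  | n + 1, ω, x => randIter α β p₁ p₂ n (phiMap p₁ p₂ ω) (lsv (sel α β p₁ ω) x)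

/-- The deterministic backward orbit `x_n^γ`: `x₀^γ = 1`, `x₁^γ = 1/2`, and for `n ≥ 2`,
`x_n^γ` is the (unique) point of `(0,1/2]` with `T_γ(x_n^γ) = x_{n-1}^γ`. -/
def IsDetBackOrbit (γ : ℝ) (x : ℕ → ℝ) : Prop :=
  x 0 = 1 ∧ x 1 = 1 / 2 ∧
    ∀ n, 2 ≤ n → x n ∈ Set.Ioc (0 : ℝ) (1 / 2) ∧ lsv γ (x n) = x (n - 1)

/-- The random backward orbit `x_n(ω)`: `x₀(ω) = 1`, `x₁(ω) = 1/2`, and for `n ≥ 2`,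
`x_n(ω)` is the (unique) point of `(0,1/2]` with `T_{α(ω)}(x_n(ω)) = x_{n-1}(φω)`. -/
def IsRandBackOrbit (α β p₁ p₂ : ℝ) (X : ℕ → ℝ → ℝ) : Prop :=
  (∀ ω, X 0 ω = 1) ∧ (∀ ω, X 1 ω = 1 / 2) ∧
    ∀ n, 2 ≤ n → ∀ ω, X n ω ∈ Set.Ioc (0 : ℝ) (1 / 2) ∧
      lsv (sel α β p₁ ω) (X n ω) = X (n - 1) (phiMap p₁ p₂ ω)

/-- The points `x'_n(ω)`: `x'₀(ω) = 1`, `x'₁(ω) = 3/4`, and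
`x'_n(ω) = (x_n(φω) + 1)/2` for `n ≥ 2`. -/
def IsRandBackOrbitPrime (p₁ p₂ : ℝ) (X X' : ℕ → ℝ → ℝ) : Prop :=
  (∀ ω, X' 0 ω = 1) ∧ (∀ ω, X' 1 ω = 3 / 4) ∧
    ∀ n, 2 ≤ n → ∀ ω, X' n ω = (X n (phiMap p₁ p₂ ω) + 1) / 2

/-- First return time of `(x,ω)` to `(1/2,1] × [0,1]` under the skew product. -/
noncomputable def returnTime (α β p₁ p₂ : ℝ) (x ω : ℝ) : ℕ :=
  sInf {k : ℕ | 1 ≤ k ∧ 1 / 2 < randIter α β p₁ p₂ k ω x}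

lemma one_sub_mul_le_one_add_rpow_neg {p s : ℝ} (hp : 0 ≤ p) (hs : -1 < s) :
    1 - p * s ≤ (1 + s) ^ (-p) :=
  calc 1 - p * s ≤ exp (-(p * s)) := by linarith [add_one_le_exp (-(p * s))]
    _ = exp s ^ (-p) := by rw [← exp_mul]; ring_nf
    _ ≤ (1 + s) ^ (-p) :=
      rpow_le_rpow_of_nonpos (by linarith) (by linarith [add_one_le_exp s]) (by linarith)

lemma rpow_neg_mul_one_sub_le {α s x y : ℝ} (hα : 0 ≤ α) (hs : -1 < s) (hx : 0 < x)
    (hy : 0 < y) (h : y ≤ x * (1 + s)) : x ^ (-α) * (1 - α * s) ≤ y ^ (-α) :=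
  calc x ^ (-α) * (1 - α * s) ≤ x ^ (-α) * (1 + s) ^ (-α) :=
        mul_le_mul_of_nonneg_left (one_sub_mul_le_one_add_rpow_neg hα hs) (by positivity)
    _ = (x * (1 + s)) ^ (-α) := (mul_rpow hx.le (by linarith)).symm
    _ ≤ y ^ (-α) := rpow_le_rpow_of_nonpos hy h (by linarith)

lemma rpow_neg_add_mul_le_of_le_sub {α c e e' : ℝ} (hα : 0 ≤ α) (hc : 0 ≤ c) (hc1 : c < 1)
    (he : 0 < e) (he1 : e ≤ 1) (he' : 0 < e') (h : e' ≤ e - c * e ^ (1 + α)) :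
    e ^ (-α) + α * c ≤ e' ^ (-α) := by
  have heα : e ^ α ≤ 1 := rpow_le_one he.le he1 hα
  have hinv : e ^ (-α) * e ^ α = 1 := by rw [← rpow_add he]; simp
  have key := rpow_neg_mul_one_sub_le hα (s := -(c * e ^ α)) (by nlinarith) he he'
    (by rw [rpow_add he, rpow_one] at h; linarith)
  linear_combination key - α * c * hinv

lemma rpow_neg_one_div_mul_le {α K n x : ℝ} (hα : 0 < α) (hK : 0 < K) (hn : 0 < n) (hx : 0 < x)
    (h : x ^ (-α) ≤ K * n) : K ^ (-(1 / α)) * n ^ (-(1 / α)) ≤ x := by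
  rw [← mul_rpow hK.le hn.le, show -(1 / α) = (-α)⁻¹ by rw [inv_neg, one_div]]
  exact (rpow_inv_le_iff_of_neg (by positivity) hx (neg_neg_of_pos hα)).2 h

lemma le_rpow_neg_one_div_mul {α K n x : ℝ} (hα : 0 < α) (hK : 0 < K) (hn : 0 < n) (hx : 0 < x)
    (h : K * n ≤ x ^ (-α)) : x ≤ K ^ (-(1 / α)) * n ^ (-(1 / α)) := by
  rw [← mul_rpow hK.le hn.le, show -(1 / α) = (-α)⁻¹ by rw [inv_neg, one_div]]
  exact (le_rpow_inv_iff_of_neg hx (by positivity) (neg_neg_of_pos hα)).2 h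

section LeftBranch

variable {γ x : ℝ}

lemma lsvLeft_eq_mul_one_add (γ : ℝ) (hx : 0 ≤ x) : lsvLeft γ x = x * (1 + (2 * x) ^ γ) := by
  rw [lsvLeft, mul_rpow zero_le_two hx]

lemma strictMonoOn_lsvLeft (hγ : 0 ≤ γ) : StrictMonoOn (lsvLeft γ) (Ici 0) := by
  intro x hx y hy hxy
  rw [lsvLeft_eq_mul_one_add γ hx, lsvLeft_eq_mul_one_add γ hy]
  have hx0 : 0 ≤ x := hx
  have : (2 * x) ^ γ ≤ (2 * y) ^ γ := rpow_le_rpow (by linarith) (by linarith) hγ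
  have : 0 ≤ (2 * y) ^ γ := rpow_nonneg (by linarith) γ
  nlinarith

lemma le_lsvLeft_le_two_mul (hγ : 0 ≤ γ) (hx : x ∈ Icc (0 : ℝ) (1 / 2)) :
    x ≤ lsvLeft γ x ∧ lsvLeft γ x ≤ 2 * x := by
  have h0 : 0 ≤ (2 * x) ^ γ := rpow_nonneg (by linarith [hx.1]) γ
  have h1 : (2 * x) ^ γ ≤ 1 := rpow_le_one (by linarith [hx.1]) (by linarith [hx.2]) hγ
  rw [lsvLeft_eq_mul_one_add γ hx.1]
  constructor <;> nlinarith [hx.1]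

lemma le_lsvLeft_sub_rpow (hγ : 0 ≤ γ) (hx : x ∈ Icc (0 : ℝ) (1 / 2)) :
    x ≤ lsvLeft γ x - lsvLeft γ x ^ (1 + γ) / 2 := by
  obtain ⟨hxy, hy2⟩ := le_lsvLeft_le_two_mul hγ hx
  have hy0 : 0 ≤ lsvLeft γ x := hx.1.trans hxy
  have hpow : lsvLeft γ x ^ γ ≤ (2 * x) ^ γ := rpow_le_rpow hy0 hy2 hγ
  rw [rpow_add' hy0 (by linarith), rpow_one]
  have hdiff : lsvLeft γ x - x = x * (2 * x) ^ γ := by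
    rw [lsvLeft_eq_mul_one_add γ hx.1]; ring
  nlinarith [mul_le_mul hy2 hpow (by positivity) (by linarith [hx.1])]

lemma rpow_neg_le_lsvLeft_rpow_neg_add {α : ℝ} (hα : 0 ≤ α) (hαγ : α ≤ γ)
    (hx : x ∈ Ioc (0 : ℝ) (1 / 2)) : x ^ (-α) ≤ lsvLeft γ x ^ (-α) + α * 2 ^ α := by
  have hγ : 0 ≤ γ := hα.trans hαγ
  have hy : 0 < lsvLeft γ x :=
    hx.1.trans_le (le_lsvLeft_le_two_mul hγ (Ioc_subset_Icc_self hx)).1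
  have hγα : (2 * x) ^ γ ≤ (2 * x) ^ α :=
    rpow_le_rpow_of_exponent_ge (by linarith [hx.1]) (by linarith [hx.2]) hαγ
  have hu : 0 ≤ (2 * x) ^ α := rpow_nonneg (by linarith [hx.1]) α
  have key := rpow_neg_mul_one_sub_le hα (s := (2 * x) ^ α) (by linarith) hx.1 hy
    (by rw [lsvLeft_eq_mul_one_add γ hx.1.le]; nlinarith [hx.1])
  have hcancel : x ^ (-α) * (2 * x) ^ α = 2 ^ α := by
    rw [mul_rpow zero_le_two hx.1.le, mul_left_comm, ← rpow_add hx.1]; simp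
  linear_combination key + α * hcancel

/-- Inverse of the left branch, written as a supremum so that it is monotone, hence measurable,
on all of `ℝ`. -/
def lsvLeftInv (γ y : ℝ) : ℝ := sSup {x | x ∈ Icc (0 : ℝ) (1 / 2) ∧ lsvLeft γ x ≤ y}

lemma monotone_lsvLeftInv (γ : ℝ) : Monotone (lsvLeftInv γ) := by
  intro y y' hy
  rcases eq_empty_or_nonempty {x | x ∈ Icc (0 : ℝ) (1 / 2) ∧ lsvLeft γ x ≤ y} with h | h
  · rw [lsvLeftInv, h, Real.sSup_empty]
    exact Real.sSup_nonneg fun x hx => hx.1.1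
  · exact csSup_le_csSup ⟨1 / 2, fun x hx => hx.1.2⟩ h fun x hx => ⟨hx.1, hx.2.trans hy⟩

lemma lsvLeftInv_lsvLeft (hγ : 0 ≤ γ) (hx : x ∈ Icc (0 : ℝ) (1 / 2)) :
    lsvLeftInv γ (lsvLeft γ x) = x :=
  IsGreatest.csSup_eq ⟨⟨hx, le_rfl⟩, fun _ hz => not_lt.1 fun hxz =>
    (strictMonoOn_lsvLeft hγ hx.1 hz.1.1 hxz).not_ge hz.2⟩

end LeftBranch

lemma le_sel {α β p₁ : ℝ} (hαβ : α ≤ β) (ω : ℝ) : α ≤ sel α β p₁ ω := by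
  unfold sel; split_ifs <;> linarith

lemma integrableOn_Icc_of_abs_le {f : ℝ → ℝ} {a b M : ℝ} (hf : Measurable f)
    (hM : ∀ x, |f x| ≤ M) : IntegrableOn f (Icc a b) :=
  .of_bound measure_Icc_lt_top hf.aestronglyMeasurable M (ae_of_all _ hM)

lemma rpow_integral_le_integral_rpow {Ω : Type*} [MeasurableSpace Ω] {μ : Measure Ω}
    [IsProbabilityMeasure μ] {f : Ω → ℝ} {p : ℝ} (hp : 1 ≤ p) (hf : ∀ ω, 0 ≤ f ω)
    (hfi : Integrable f μ) (hfpi : Integrable (fun ω => f ω ^ p) μ) :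
    (∫ ω, f ω ∂μ) ^ p ≤ ∫ ω, f ω ^ p ∂μ :=
  (convexOn_rpow hp).map_integral_le (continuous_rpow_const (by linarith)).continuousOn
    isClosed_Ici (ae_of_all _ hf) hfi hfpi

lemma setIntegral_Icc_eq_Ico_add_Icc {f : ℝ → ℝ} {a b c : ℝ} (hab : a ≤ b) (hbc : b ≤ c)
    (hf : IntegrableOn f (Icc a c)) :
    ∫ x in Icc a c, f x = (∫ x in Ico a b, f x) + ∫ x in Icc b c, f x := by
  rw [← Ico_union_Icc_eq_Icc hab hbc] at hf ⊢
  exact setIntegral_union (disjoint_left.2 fun x hx hx' => hx.2.not_ge hx'.1) measurableSet_Icc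
    hf.left_of_union hf.right_of_union

section PhiMap

variable {p₁ p₂ : ℝ}

lemma measurable_phiMap : Measurable (phiMap p₁ p₂) :=
  Measurable.ite measurableSet_Iio (measurable_id.div_const _)
    ((measurable_id.sub_const _).div_const _)

lemma setIntegral_Ico_comp_phiMap (hp₁ : 0 < p₁) (h : ℝ → ℝ) :
    ∫ ω in Ico (0 : ℝ) p₁, h (phiMap p₁ p₂ ω) = p₁ * ∫ ω in Icc (0 : ℝ) 1, h ω := by
  rw [setIntegral_congr_fun measurableSet_Ico fun ω hω => by rw [phiMap, if_pos hω.2],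
    setIntegral_congr_set Ico_ae_eq_Ioc, ← intervalIntegral.integral_of_le hp₁.le,
    intervalIntegral.integral_comp_div h hp₁.ne', zero_div, div_self hp₁.ne',
    intervalIntegral.integral_of_le zero_le_one, integral_Icc_eq_integral_Ioc, smul_eq_mul]

lemma setIntegral_Icc_comp_phiMap (hp₂ : 0 < p₂) (hp : p₁ + p₂ = 1) (h : ℝ → ℝ) :
    ∫ ω in Icc p₁ 1, h (phiMap p₁ p₂ ω) = p₂ * ∫ ω in Icc (0 : ℝ) 1, h ω := by
  rw [setIntegral_congr_fun measurableSet_Icc fun ω hω => by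
      rw [phiMap, if_neg (not_lt.2 hω.1), sub_div],
    integral_Icc_eq_integral_Ioc, ← intervalIntegral.integral_of_le (by linarith),
    intervalIntegral.integral_comp_div_sub h hp₂.ne', sub_self,
    show 1 / p₂ - p₁ / p₂ = 1 by field_simp; linarith,
    intervalIntegral.integral_of_le zero_le_one, integral_Icc_eq_integral_Ioc, smul_eq_mul]

lemma setIntegral_comp_phiMap (hp₁ : 0 < p₁) (hp₂ : 0 < p₂) (hp : p₁ + p₂ = 1) {h : ℝ → ℝ}
    (hh : IntegrableOn (fun ω => h (phiMap p₁ p₂ ω)) (Icc 0 1)) :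
    ∫ ω in Icc (0 : ℝ) 1, h (phiMap p₁ p₂ ω) = ∫ ω in Icc (0 : ℝ) 1, h ω := by
  rw [setIntegral_Icc_eq_Ico_add_Icc hp₁.le (by linarith) hh,
    setIntegral_Ico_comp_phiMap (p₂ := p₂) hp₁,
    setIntegral_Icc_comp_phiMap hp₂ hp, ← add_mul, hp, one_mul]

lemma setIntegral_le_of_le_comp_phiMap (hp₁ : 0 < p₁) (hp₂ : 0 < p₂) (hp : p₁ + p₂ = 1)
    {f g h : ℝ → ℝ} (hf : IntegrableOn f (Icc 0 1))
    (hg : IntegrableOn (fun ω => g (phiMap p₁ p₂ ω)) (Icc 0 1))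
    (hh : IntegrableOn (fun ω => h (phiMap p₁ p₂ ω)) (Icc 0 1))
    (hfg : ∀ ω ∈ Ico (0 : ℝ) p₁, f ω ≤ g (phiMap p₁ p₂ ω))
    (hfh : ∀ ω ∈ Icc p₁ 1, f ω ≤ h (phiMap p₁ p₂ ω)) :
    ∫ ω in Icc (0 : ℝ) 1, f ω ≤
      p₁ * (∫ ω in Icc (0 : ℝ) 1, g ω) + p₂ * ∫ ω in Icc (0 : ℝ) 1, h ω := by
  have hIco : Ico 0 p₁ ⊆ Icc (0 : ℝ) 1 :=
    Ico_subset_Icc_self.trans (Icc_subset_Icc_right (by linarith))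
  have hIcc : Icc p₁ 1 ⊆ Icc (0 : ℝ) 1 := Icc_subset_Icc_left hp₁.le
  rw [setIntegral_Icc_eq_Ico_add_Icc hp₁.le (by linarith) hf,
    ← setIntegral_Ico_comp_phiMap (p₂ := p₂) hp₁,
    ← setIntegral_Icc_comp_phiMap hp₂ hp]
  exact add_le_add
    (setIntegral_mono_on (hf.mono_set hIco) (hg.mono_set hIco) measurableSet_Ico hfg)
    (setIntegral_mono_on (hf.mono_set hIcc) (hh.mono_set hIcc) measurableSet_Icc hfh)

end PhiMap

namespace IsRandBackOrbit

variable {α β p₁ p₂ : ℝ} {X : ℕ → ℝ → ℝ}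

lemma mem_Ioc (hX : IsRandBackOrbit α β p₁ p₂ X) {n : ℕ} (hn : 1 ≤ n) (ω : ℝ) :
    X n ω ∈ Ioc (0 : ℝ) (1 / 2) := by
  obtain rfl | hn := hn.eq_or_lt
  · rw [hX.2.1 ω]; norm_num
  · exact (hX.2.2 n hn ω).1

lemma abs_le_one (hX : IsRandBackOrbit α β p₁ p₂ X) (n : ℕ) (ω : ℝ) : |X n ω| ≤ 1 := by
  rcases n.eq_zero_or_pos with rfl | hn
  · simp [hX.1 ω]
  · have := hX.mem_Ioc hn ω
    exact abs_le.2 ⟨by linarith [this.1], by linarith [this.2]⟩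

lemma lsvLeft_succ (hX : IsRandBackOrbit α β p₁ p₂ X) {n : ℕ} (hn : 1 ≤ n) (ω : ℝ) :
    lsvLeft (sel α β p₁ ω) (X (n + 1) ω) = X n (phiMap p₁ p₂ ω) := by
  obtain ⟨hmem, h⟩ := hX.2.2 (n + 1) (by omega) ω
  rwa [lsv, if_pos hmem.2] at h

lemma measurable (hX : IsRandBackOrbit α β p₁ p₂ X) (hα : 0 ≤ α) (hαβ : α ≤ β) (n : ℕ) :
    Measurable (X n) := by
  induction n with
  | zero => rw [funext hX.1]; exact measurable_const
  | succ n ih =>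
    rcases n.eq_zero_or_pos with rfl | hn
    · rw [funext hX.2.1]; exact measurable_const
    have hsucc (ω : ℝ) : X (n + 1) ω = lsvLeftInv (sel α β p₁ ω) (X n (phiMap p₁ p₂ ω)) := by
      rw [← hX.lsvLeft_succ hn ω, lsvLeftInv_lsvLeft (hα.trans (le_sel hαβ ω))
        (Ioc_subset_Icc_self (hX.mem_Ioc (by omega) ω))]
    simp only [funext hsucc, sel, apply_ite lsvLeftInv, ite_apply]
    exact Measurable.ite measurableSet_Iio
      ((monotone_lsvLeftInv α).measurable.comp (ih.comp measurable_phiMap))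
      ((monotone_lsvLeftInv β).measurable.comp (ih.comp measurable_phiMap))

lemma integrableOn (hX : IsRandBackOrbit α β p₁ p₂ X) (hα : 0 ≤ α) (hαβ : α ≤ β) (n : ℕ) :
    IntegrableOn (X n) (Icc 0 1) :=
  integrableOn_Icc_of_abs_le (hX.measurable hα hαβ n) (hX.abs_le_one n)

lemma rpow_neg_le (hX : IsRandBackOrbit α β p₁ p₂ X) (hα : 0 ≤ α) (hαβ : α ≤ β) {n : ℕ}
    (hn : 1 ≤ n) (ω : ℝ) : X n ω ^ (-α) ≤ 2 ^ α * (1 + α * (n - 1)) := by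
  induction n, hn using Nat.le_induction generalizing ω with
  | base => simp [hX.2.1 ω, rpow_neg, inv_rpow]
  | succ n hn ih =>
    have hstep := rpow_neg_le_lsvLeft_rpow_neg_add hα (le_sel (p₁ := p₁) hαβ ω)
      (hX.mem_Ioc (n := n + 1) (by omega) ω)
    rw [hX.lsvLeft_succ hn ω] at hstep
    have := ih (phiMap p₁ p₂ ω)
    push_cast
    linarith

lemma le_apply (hX : IsRandBackOrbit α β p₁ p₂ X) (hα : 0 < α) (hαβ : α ≤ β) {n : ℕ}
    (hn : 1 ≤ n) (ω : ℝ) : (2 ^ α * (1 + α)) ^ (-(1 / α)) * (n : ℝ) ^ (-(1 / α)) ≤ X n ω := by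
  have hn' : (1 : ℝ) ≤ n := by exact_mod_cast hn
  refine rpow_neg_one_div_mul_le hα (by positivity) (by positivity) (hX.mem_Ioc hn ω).1
    ((hX.rpow_neg_le hα.le hαβ hn ω).trans ?_)
  rw [mul_assoc]
  exact mul_le_mul_of_nonneg_left (by nlinarith) (by positivity)

lemma le_integral (hX : IsRandBackOrbit α β p₁ p₂ X) (hα : 0 < α) (hαβ : α ≤ β) {n : ℕ}
    (hn : 1 ≤ n) :
    (2 ^ α * (1 + α)) ^ (-(1 / α)) * (n : ℝ) ^ (-(1 / α)) ≤ ∫ ω in Icc (0 : ℝ) 1, X n ω := by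
  simpa using setIntegral_ge_of_const_le_real measurableSet_Icc (by simp)
    (fun ω _ => hX.le_apply hα hαβ hn ω) (hX.integrableOn hα.le hαβ n)

lemma integral_mem_Ioc (hX : IsRandBackOrbit α β p₁ p₂ X) (hα : 0 < α) (hαβ : α ≤ β) {n : ℕ}
    (hn : 1 ≤ n) : ∫ ω in Icc (0 : ℝ) 1, X n ω ∈ Ioc (0 : ℝ) (1 / 2) := by
  refine ⟨lt_of_lt_of_le (by positivity) (hX.le_integral hα hαβ hn), ?_⟩
  simpa using setIntegral_mono_on (hX.integrableOn hα.le hαβ n)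
    (integrableOn_const (C := (1 / 2 : ℝ)) measure_Icc_lt_top.ne) measurableSet_Icc
    fun ω _ => (hX.mem_Ioc hn ω).2

lemma apply_succ_le (hX : IsRandBackOrbit α β p₁ p₂ X) (hα : 0 ≤ α) (hαβ : α ≤ β) {n : ℕ}
    (hn : 1 ≤ n) (ω : ℝ) : X (n + 1) ω ≤ X n (phiMap p₁ p₂ ω) := by
  have := (le_lsvLeft_le_two_mul (hα.trans (le_sel (p₁ := p₁) hαβ ω))
    (Ioc_subset_Icc_self (hX.mem_Ioc (n := n + 1) (by omega) ω))).1
  rwa [hX.lsvLeft_succ hn ω] at this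

lemma apply_succ_le_sub_rpow (hX : IsRandBackOrbit α β p₁ p₂ X) (hα : 0 ≤ α) {n : ℕ}
    (hn : 1 ≤ n) {ω : ℝ} (hω : ω < p₁) :
    X (n + 1) ω ≤ X n (phiMap p₁ p₂ ω) - X n (phiMap p₁ p₂ ω) ^ (1 + α) / 2 := by
  have := le_lsvLeft_sub_rpow hα (Ioc_subset_Icc_self (hX.mem_Ioc (n := n + 1) (by omega) ω))
  rwa [← hX.lsvLeft_succ hn ω, sel, if_pos hω]

lemma integral_succ_le (hX : IsRandBackOrbit α β p₁ p₂ X) (hα : 0 < α) (hαβ : α ≤ β)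
    (hp₁ : 0 < p₁) (hp₂ : 0 < p₂) (hp : p₁ + p₂ = 1) {n : ℕ} (hn : 1 ≤ n) :
    ∫ ω in Icc (0 : ℝ) 1, X (n + 1) ω ≤
      (∫ ω in Icc (0 : ℝ) 1, X n ω) - p₁ / 2 * (∫ ω in Icc (0 : ℝ) 1, X n ω) ^ (1 + α) := by
  have hXm := hX.measurable hα.le hαβ n
  have hmem := hX.mem_Ioc hn
  have hpow (x : ℝ) : X n x ^ (1 + α) ∈ Icc (0 : ℝ) 1 :=
    ⟨rpow_nonneg (hmem x).1.le _,
      rpow_le_one (hmem x).1.le (by linarith [(hmem x).2]) (by linarith)⟩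
  have hpow_int : IntegrableOn (fun x => X n x ^ (1 + α)) (Icc 0 1) :=
    integrableOn_Icc_of_abs_le (hXm.pow_const _) fun x =>
      abs_le.2 ⟨by linarith [(hpow x).1], (hpow x).2⟩
  have hg_int : IntegrableOn (fun ω => X n (phiMap p₁ p₂ ω) - X n (phiMap p₁ p₂ ω) ^ (1 + α) / 2)
      (Icc 0 1) :=
    integrableOn_Icc_of_abs_le (M := 1)
      ((hXm.sub ((hXm.pow_const _).div_const _)).comp measurable_phiMap) fun ω => abs_le.2
        ⟨by linarith [(hmem (phiMap p₁ p₂ ω)).1, (hpow (phiMap p₁ p₂ ω)).2],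
          by linarith [(hmem (phiMap p₁ p₂ ω)).2, (hpow (phiMap p₁ p₂ ω)).1]⟩
  have hstep := setIntegral_le_of_le_comp_phiMap hp₁ hp₂ hp (hX.integrableOn hα.le hαβ (n + 1))
    (g := fun x => X n x - X n x ^ (1 + α) / 2) hg_int
    (integrableOn_Icc_of_abs_le (hXm.comp measurable_phiMap) fun ω => hX.abs_le_one n _)
    (fun ω hω => hX.apply_succ_le_sub_rpow hα.le hn hω.2)
    (fun ω _ => hX.apply_succ_le hα.le hαβ hn ω)
  have hjensen :
      (∫ ω in Icc (0 : ℝ) 1, X n ω) ^ (1 + α) ≤ ∫ ω in Icc (0 : ℝ) 1, X n ω ^ (1 + α) :=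
    haveI : IsProbabilityMeasure (volume.restrict (Icc (0 : ℝ) 1)) := ⟨by simp⟩
    rpow_integral_le_integral_rpow (by linarith) (fun ω => (hmem ω).1.le)
      (hX.integrableOn hα.le hαβ n) hpow_int
  rw [integral_sub (hX.integrableOn hα.le hαβ n) (hpow_int.div_const _), integral_div] at hstep
  have hsum := congrArg (· * ∫ ω in Icc (0 : ℝ) 1, X n ω) hp
  linarith [mul_le_mul_of_nonneg_left hjensen hp₁.le]

lemma le_integral_rpow_neg (hX : IsRandBackOrbit α β p₁ p₂ X) (hα : 0 < α) (hαβ : α ≤ β)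
    (hp₁ : 0 < p₁) (hp₂ : 0 < p₂) (hp : p₁ + p₂ = 1) {n : ℕ} (hn : 1 ≤ n) :
    2 ^ α + α * (p₁ / 2) * (n - 1) ≤ (∫ ω in Icc (0 : ℝ) 1, X n ω) ^ (-α) := by
  induction n, hn using Nat.le_induction with
  | base => simp [hX.2.1, rpow_neg, inv_rpow]
  | succ n hn ih =>
    have hE := hX.integral_mem_Ioc hα hαβ hn
    have := rpow_neg_add_mul_le_of_le_sub hα.le (by positivity) (by linarith) hE.1
      (by linarith [hE.2]) (hX.integral_mem_Ioc hα hαβ (n := n + 1) (by omega)).1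
      (hX.integral_succ_le hα hαβ hp₁ hp₂ hp hn)
    push_cast
    linarith

lemma integral_le (hX : IsRandBackOrbit α β p₁ p₂ X) (hα : 0 < α) (hαβ : α ≤ β)
    (hp₁ : 0 < p₁) (hp₂ : 0 < p₂) (hp : p₁ + p₂ = 1) {n : ℕ} (hn : 1 ≤ n) :
    ∫ ω in Icc (0 : ℝ) 1, X n ω ≤
      (min (2 ^ α) (α * (p₁ / 2))) ^ (-(1 / α)) * (n : ℝ) ^ (-(1 / α)) := by
  have hn' : (1 : ℝ) ≤ n := by exact_mod_cast hn
  refine le_rpow_neg_one_div_mul hα (lt_min (by positivity) (by positivity)) (by positivity)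
    (hX.integral_mem_Ioc hα hαβ hn).1
    ((?_ : _ ≤ _).trans (hX.le_integral_rpow_neg hα hαβ hp₁ hp₂ hp hn))
  nlinarith [min_le_left (2 ^ α) (α * (p₁ / 2)), min_le_right (2 ^ α) (α * (p₁ / 2))]

end IsRandBackOrbit

lemma IsRandBackOrbitPrime.setIntegral_sub_half {α β p₁ p₂ : ℝ} {X X' : ℕ → ℝ → ℝ}
    (hX' : IsRandBackOrbitPrime p₁ p₂ X X') (hX : IsRandBackOrbit α β p₁ p₂ X) (hα : 0 ≤ α)
    (hαβ : α ≤ β) (hp₁ : 0 < p₁) (hp₂ : 0 < p₂) (hp : p₁ + p₂ = 1) {n : ℕ} (hn : 1 ≤ n) :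
    ∫ ω in Icc (0 : ℝ) 1, (X' n ω - 1 / 2) = (∫ ω in Icc (0 : ℝ) 1, X n ω) / 2 := by
  obtain rfl | hn := hn.eq_or_lt
  · simp [hX'.2.1, hX.2.1]
    norm_num
  calc ∫ ω in Icc (0 : ℝ) 1, (X' n ω - 1 / 2)
      = ∫ ω in Icc (0 : ℝ) 1, X n (phiMap p₁ p₂ ω) / 2 :=
        setIntegral_congr_fun measurableSet_Icc fun ω _ => by rw [hX'.2.2 n hn ω]; ring
    _ = (∫ ω in Icc (0 : ℝ) 1, X n ω) / 2 := by
      rw [integral_div, setIntegral_comp_phiMap hp₁ hp₂ hp (integrableOn_Icc_of_abs_le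
        ((hX.measurable hα hαβ n).comp measurable_phiMap) fun ω => hX.abs_le_one n _)]

lemma exists_one_le_inv_mul_le_and_le_mul {F g : ℕ → ℝ} {a b : ℝ} (ha : 0 < a)
    (hg : ∀ n, 1 ≤ n → 0 ≤ g n) (h : ∀ n, 1 ≤ n → a * g n ≤ F n ∧ F n ≤ b * g n) :
    ∃ C : ℝ, 1 ≤ C ∧ ∀ n, 1 ≤ n → C⁻¹ * g n ≤ F n ∧ F n ≤ C * g n := by
  refine ⟨max 1 (max a⁻¹ b), le_max_left _ _, fun n hn => ⟨?_, ?_⟩⟩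
  · refine le_trans (mul_le_mul_of_nonneg_right ?_ (hg n hn)) (h n hn).1
    exact inv_le_of_inv_le₀ ha (le_max_of_le_right (le_max_left _ _))
  · exact (h n hn).2.trans
      (mul_le_mul_of_nonneg_right (le_max_of_le_right (le_max_right _ _)) (hg n hn))

/-- For `0 < α < β` and `p₁, p₂ > 0` with `p₁ + p₂ = 1`, there is
`C ≥ 1` with `C⁻¹ n^{−1/α} ≤ ∫₀¹ (x'_n(ω) − 1/2) dω ≤ C n^{−1/α}` for all `n ≥ 1`. -/
theorem expectation_randBackOrbitPrime (α β p₁ p₂ : ℝ) (hα : 0 < α) (hαβ : α < β)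
    (hp₁ : 0 < p₁) (hp₂ : 0 < p₂) (hp : p₁ + p₂ = 1)
    (X X' : ℕ → ℝ → ℝ) (hX : IsRandBackOrbit α β p₁ p₂ X)
    (hX' : IsRandBackOrbitPrime p₁ p₂ X X') :
    ∃ C : ℝ, 1 ≤ C ∧ ∀ n : ℕ, 1 ≤ n →
      C⁻¹ * (n : ℝ) ^ (-(1 / α)) ≤ (∫ ω in Set.Icc (0 : ℝ) 1, (X' n ω - 1 / 2)) ∧
      (∫ ω in Set.Icc (0 : ℝ) 1, (X' n ω - 1 / 2)) ≤ C * (n : ℝ) ^ (-(1 / α)) := by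
  refine exists_one_le_inv_mul_le_and_le_mul (F := fun n => ∫ ω in Icc (0 : ℝ) 1, (X' n ω - 1 / 2))
    (g := fun n => (n : ℝ) ^ (-(1 / α))) (a := (2 ^ α * (1 + α)) ^ (-(1 / α)) / 2)
    (b := (min (2 ^ α) (α * (p₁ / 2))) ^ (-(1 / α)) / 2) (by positivity)
    (fun n _ => by positivity) fun n hn => ?_
  have hlower := hX.le_integral hα hαβ.le hn
  have hupper := hX.integral_le hα hαβ.le hp₁ hp₂ hp hn
  simp only [hX'.setIntegral_sub_half hX hα.le hαβ.le hp₁ hp₂ hp hn]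
  constructor <;> linarith
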